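/- Let A ∈ ℝ^{n×n} with det A > 0 and ‖A‖ⁿ ≤ K · det A for the operator norm ‖·‖. Then the adjugate satisfies ‖adj(A)‖ⁿ ≤ K^{n-1} · det(adj(A)). -/

import Mathlib

open Matrix MeasureTheory

noncomputable def msqrt {n : ℕ} (A : Matrix (Fin n) (Fin n) ℝ) : Matrix (Fin n) (Fin n) ℝ :=
  ((Matrix.posSemidef_conjTranspose_mul_self A).isHermitian.eigenvectorUnitary : Matrix (Fin n) (Fin n) ℝ) *
    diagonal ((↑) ∘ (Real.sqrt ·) ∘ (Matrix.posSemidef_conjTranspose_mul_self A).isHermitian.eigenvalues) *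
    (star ((Matrix.posSemidef_conjTranspose_mul_self A).isHermitian.eigenvectorUnitary : Matrix (Fin n) (Fin n) ℝ))

noncomputable def frobNorm {n : ℕ} (A : Matrix (Fin n) (Fin n) ℝ) : ℝ :=
  Real.sqrt (∑ i, ∑ j, (A i j) ^ 2)

noncomputable def opNorm {n : ℕ} (A : Matrix (Fin n) (Fin n) ℝ) : ℝ :=
  ‖Matrix.toEuclideanCLM (𝕜 := ℝ) A‖

noncomputable def sLam {n : ℕ} (A : Matrix (Fin n) (Fin n) ℝ) : ℝ :=
  sInf {y | ∃ v : EuclideanSpace ℝ (Fin n), ‖v‖ = 1 ∧ y = ‖Matrix.toEuclideanCLM (𝕜 := ℝ) A v‖}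


/-!
Conjugating by a unitary commutes with the adjugate, so a Hermitian `B = U D U*` has
`adj B = U (adj D) U*`, whose diagonal entries `∏_{j ≠ i} λ_j` are bounded by `‖B‖^(n-1)`.
For arbitrary `A`, `adj(A)ᴴ adj(A) = adj(A Aᴴ)` and the C*-identity give `‖adj A‖ ≤ ‖A‖^(n-1)`.
Raising this to the `n`-th power and using `‖A‖ⁿ ≤ K det A` and `det (adj A) = (det A)^(n-1)`
gives the estimate.
-/

namespace Matrix

open scoped Matrix.Norms.L2Operator

variable {𝕜 n : Type*} [RCLike 𝕜] [Fintype n] [DecidableEq n]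

theorem adjugate_unitary_conj {U : Matrix n n 𝕜} (hU : U ∈ unitary (Matrix n n 𝕜))
    (M : Matrix n n 𝕜) : adjugate (U * M * star U) = U * adjugate M * star U := by
  have hadjU : adjugate U = det U • star U := by
    rw [← one_mul (adjugate U), ← Unitary.star_mul_self_of_mem hU, mul_assoc, mul_adjugate,
      Matrix.mul_smul, mul_one]
  have hdet : det U * star (det U) = 1 := by
    rw [← det_conjTranspose, ← det_mul, ← star_eq_conjTranspose, Unitary.mul_star_self_of_mem hU,
      det_one]
  have hadj_star : adjugate (star U) = star (adjugate U) := (adjugate_conjTranspose U).symm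
  rw [adjugate_mul_distrib, adjugate_mul_distrib, hadj_star, hadjU, star_smul, star_star]
  simp only [smul_mul_assoc, mul_smul_comm, smul_smul, hdet, one_smul, mul_assoc]

theorem l2_opNorm_adjugate_diagonal_le (d : n → 𝕜) :
    ‖adjugate (diagonal d)‖ ≤ ‖diagonal d‖ ^ (Fintype.card n - 1) := by
  rw [adjugate_diagonal, l2_opNorm_diagonal, l2_opNorm_diagonal]
  refine pi_norm_le_iff_of_nonneg (by positivity) |>.2 fun i => ?_
  rw [norm_prod, ← Finset.card_univ, ← Finset.card_erase_of_mem (Finset.mem_univ i),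
    ← Finset.prod_const]
  exact Finset.prod_le_prod (fun j _ => norm_nonneg _) fun j _ => norm_le_pi_norm d j

theorem IsHermitian.l2_opNorm_adjugate_le {B : Matrix n n 𝕜} (hB : B.IsHermitian) :
    ‖B.adjugate‖ ≤ ‖B‖ ^ (Fintype.card n - 1) := by
  rw [hB.spectral_theorem, Unitary.conjStarAlgAut_apply,
    adjugate_unitary_conj hB.eigenvectorUnitary.prop]
  simp only [← Unitary.coe_star, CStarRing.norm_mul_coe_unitary, CStarRing.norm_coe_unitary_mul]
  exact l2_opNorm_adjugate_diagonal_le _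

theorem l2_opNorm_adjugate_le (A : Matrix n n 𝕜) :
    ‖adjugate A‖ ≤ ‖A‖ ^ (Fintype.card n - 1) := by
  have hsq : ‖adjugate A‖ ^ 2 ≤ (‖A‖ ^ (Fintype.card n - 1)) ^ 2 := by
    calc ‖adjugate A‖ ^ 2 = ‖adjugate (A * Aᴴ)‖ := by
          rw [adjugate_mul_distrib, ← adjugate_conjTranspose, ← star_eq_conjTranspose,
            CStarRing.norm_star_mul_self, sq]
      _ ≤ ‖A * Aᴴ‖ ^ (Fintype.card n - 1) :=
          IsHermitian.l2_opNorm_adjugate_le (isHermitian_mul_conjTranspose_self A)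
      _ = (‖A‖ ^ (Fintype.card n - 1)) ^ 2 := by
          rw [← star_eq_conjTranspose, CStarRing.norm_self_mul_star, ← sq, ← pow_mul, ← pow_mul,
            mul_comm]
  exact (pow_le_pow_iff_left₀ (norm_nonneg _) (by positivity) two_ne_zero).1 hsq

end Matrix

open scoped Matrix.Norms.L2Operator in
theorem opNorm_adjugate_le {n : ℕ} (A : Matrix (Fin n) (Fin n) ℝ) :
    opNorm A.adjugate ≤ opNorm A ^ (n - 1) := by
  have := A.l2_opNorm_adjugate_le
  rwa [Fintype.card_fin] at this

theorem stmt_5_general {n : ℕ} (A : Matrix (Fin n) (Fin n) ℝ) (K : ℝ)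
    (h : opNorm A ^ n ≤ K * A.det) :
    opNorm A.adjugate ^ n ≤ K ^ (n - 1) * A.adjugate.det := by
  calc opNorm A.adjugate ^ n ≤ (opNorm A ^ (n - 1)) ^ n := by
        gcongr
        · exact norm_nonneg _
        · exact opNorm_adjugate_le A
    _ = (opNorm A ^ n) ^ (n - 1) := by rw [← pow_mul, ← pow_mul, mul_comm]
    _ ≤ (K * A.det) ^ (n - 1) := by gcongr; exact pow_nonneg (norm_nonneg _) n
    _ = K ^ (n - 1) * A.adjugate.det := by rw [det_adjugate, Fintype.card_fin, mul_pow]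

/-- The dilatation estimate for the adjugate. -/
theorem stmt_5 {n : ℕ} (A : Matrix (Fin n) (Fin n) ℝ) (K : ℝ)
    (hdet : 0 < A.det) (h : opNorm A ^ n ≤ K * A.det) :
    opNorm A.adjugate ^ n ≤ K ^ (n - 1) * A.adjugate.det :=
  stmt_5_general A K h
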